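/- If G is an HZ-graph with maximum degree Δ ≥ 3, then the minimum degree of G equals Δ−1. -/

import Mathlib

/-!
Pass to a `Δ`-edge-critical subgraph `H` of `G` (one that is not `Δ`-edge-colourable although
every proper subgraph obtained by deleting an edge is). Vizing's adjacency lemma says that for
every edge `xy` of `H`, `x` has at least `Δ - d_H(y) + 1` neighbours of `H`-degree `Δ` other
than `y`; it follows from the classical fan argument, where the colours missing at the vertices
of a fan at `x` are pairwise disjoint (by Kempe-chain interchanges) and all appear at `x`.

Since no vertex of degree `Δ` has three neighbours of degree `Δ`, applying the adjacency lemma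
twice along an edge shows that every non-isolated vertex of `H` has `H`-degree at least `Δ - 1`,
and then that `H` contains every edge of the connected graph `G`. So `G` itself is critical,
`δ(G) ≥ Δ - 1`, and `G` is not `Δ`-regular, as its core would then be `Δ`-regular with `Δ ≥ 3`.
-/

open SimpleGraph

/-- A proper edge `k`-coloring of `G` with colors in `[1, k]`. -/
def IsProperEdgeColoring {V : Type*} (G : SimpleGraph V) (k : ℕ) (c : Sym2 V → ℕ) : Prop :=
  (∀ e ∈ G.edgeSet, c e ∈ Finset.Icc 1 k) ∧
  ∀ e ∈ G.edgeSet, ∀ f ∈ G.edgeSet, e ≠ f → (∃ v : V, v ∈ e ∧ v ∈ f) → c e ≠ c f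

/-- `G` has a proper edge coloring with `k` colors. -/
def EdgeColorable {V : Type*} (G : SimpleGraph V) (k : ℕ) : Prop :=
  ∃ c : Sym2 V → ℕ, IsProperEdgeColoring G k c

/-- The set of colors of `[1, k]` missing at `v`. -/
def missingColors {V : Type*} (G : SimpleGraph V) (k : ℕ) (c : Sym2 V → ℕ) (v : V) : Set ℕ :=
  {α | α ∈ Finset.Icc 1 k ∧ ¬ ∃ e ∈ G.edgeSet, v ∈ e ∧ c e = α}

/-- The subgraph of `G` consisting of the edges colored `α` or `β`;
its components are the `(α, β)`-chains. -/
def chainGraph {V : Type*} (G : SimpleGraph V) (c : Sym2 V → ℕ) (α β : ℕ) : SimpleGraph V :=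
  SimpleGraph.fromEdgeSet {e ∈ G.edgeSet | c e = α ∨ c e = β}

open Finset Classical

section Recoloring

variable {V : Type*} {G H : SimpleGraph V} {k a : ℕ} {c : Sym2 V → ℕ} {u v w : V}

theorem notMem_missingColors_of_adj (h : G.Adj v w) : c s(v, w) ∉ missingColors G k c v :=
  fun hm => hm.2 ⟨s(v, w), h, Sym2.mem_mk_left v w, rfl⟩

theorem exists_adj_of_notMem_missingColors (ha : a ∈ Icc 1 k)
    (h : a ∉ missingColors G k c v) : ∃ w, G.Adj v w ∧ c s(v, w) = a := by
  obtain ⟨e, he, hv, rfl⟩ : ∃ e ∈ G.edgeSet, v ∈ e ∧ c e = a := by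
    by_contra h'
    exact h ⟨ha, h'⟩
  obtain ⟨w, rfl⟩ := Sym2.mem_iff_exists.mp hv
  exact ⟨w, he, rfl⟩

theorem missingColors_anti (h : H ≤ G) : missingColors G k c v ⊆ missingColors H k c v :=
  fun _ ⟨ha, hn⟩ => ⟨ha, fun ⟨e, he, hv, hc⟩ => hn ⟨e, edgeSet_mono h he, hv, hc⟩⟩

theorem IsProperEdgeColoring.anti (hc : IsProperEdgeColoring G k c) (h : H ≤ G) :
    IsProperEdgeColoring H k c :=
  ⟨fun e he => hc.1 e (edgeSet_mono h he),
    fun e he f hf => hc.2 e (edgeSet_mono h he) f (edgeSet_mono h hf)⟩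

theorem IsProperEdgeColoring.eq_of_mem_of_mem (hc : IsProperEdgeColoring G k c) {e f : Sym2 V}
    (he : e ∈ G.edgeSet) (hf : f ∈ G.edgeSet) (hve : v ∈ e) (hvf : v ∈ f) (hef : c e = c f) :
    e = f := by
  by_contra hne
  exact hc.2 e he f hf hne ⟨v, hve, hvf⟩ hef

theorem missingColors_update_of_notMem {e : Sym2 V} (hw : w ∉ e) :
    missingColors G k (Function.update c e a) w = missingColors G k c w := by
  have key : ∀ f, w ∈ f → Function.update c e a f = c f := fun f hwf =>
    Function.update_of_ne (by rintro rfl; exact hw hwf) _ _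
  ext b
  constructor <;> rintro ⟨hb, hn⟩ <;> refine ⟨hb, fun ⟨f, hf, hwf, hcf⟩ => hn ⟨f, hf, hwf, ?_⟩⟩
  · rwa [key f hwf]
  · rwa [key f hwf] at hcf

theorem IsProperEdgeColoring.update_of_deleteEdges (huv : G.Adj u v)
    (hc : IsProperEdgeColoring (G.deleteEdges {s(u, v)}) k c)
    (hu : a ∈ missingColors (G.deleteEdges {s(u, v)}) k c u)
    (hv : a ∈ missingColors (G.deleteEdges {s(u, v)}) k c v) :
    IsProperEdgeColoring G k (Function.update c s(u, v) a) := by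
  have hmem : ∀ e ∈ G.edgeSet, e ≠ s(u, v) → e ∈ (G.deleteEdges {s(u, v)}).edgeSet :=
    fun e he hne => by rw [edgeSet_deleteEdges]; exact ⟨he, hne⟩
  have hfree : ∀ f ∈ G.edgeSet, f ≠ s(u, v) → ∀ w ∈ s(u, v), w ∈ f → c f ≠ a := by
    intro f hf hne w hw hwf hcf
    rcases Sym2.mem_iff.mp hw with rfl | rfl
    · exact hu.2 ⟨f, hmem f hf hne, hwf, hcf⟩
    · exact hv.2 ⟨f, hmem f hf hne, hwf, hcf⟩
  refine ⟨fun e he => ?_, fun e he f hf hef ⟨w, hwe, hwf⟩ => ?_⟩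
  · by_cases hee : e = s(u, v)
    · rw [hee, Function.update_self]
      exact hu.1
    · rw [Function.update_of_ne hee]
      exact hc.1 e (hmem e he hee)
  · by_cases hee : e = s(u, v) <;> by_cases hff : f = s(u, v)
    · exact absurd (hee.trans hff.symm) hef
    · rw [hee, Function.update_self, Function.update_of_ne hff]
      exact (hfree f hf hff w (hee ▸ hwe) hwf).symm
    · rw [hff, Function.update_self, Function.update_of_ne hee]
      exact hfree e he hee w (hff ▸ hwf) hwe
    · rw [Function.update_of_ne hee, Function.update_of_ne hff]
      exact hc.2 e (hmem e he hee) f (hmem f hf hff) hef ⟨w, hwe, hwf⟩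

theorem disjoint_missingColors_deleteEdges (hG : ¬ EdgeColorable G k) (huv : G.Adj u v)
    (hc : IsProperEdgeColoring (G.deleteEdges {s(u, v)}) k c) :
    Disjoint (missingColors (G.deleteEdges {s(u, v)}) k c u)
      (missingColors (G.deleteEdges {s(u, v)}) k c v) :=
  Set.disjoint_left.mpr fun _ hu hv => hG ⟨_, hc.update_of_deleteEdges huv hu hv⟩

theorem IsProperEdgeColoring.update_of_adj (hc : IsProperEdgeColoring G k c) (huv : G.Adj u v)
    (hu : a ∈ missingColors G k c u) (hv : a ∈ missingColors G k c v) :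
    IsProperEdgeColoring G k (Function.update c s(u, v) a) :=
  (hc.anti (G.deleteEdges_le _)).update_of_deleteEdges huv
    (missingColors_anti (G.deleteEdges_le _) hu) (missingColors_anti (G.deleteEdges_le _) hv)

theorem IsProperEdgeColoring.mem_missingColors_update (hc : IsProperEdgeColoring G k c)
    (huv : G.Adj u v) (ha : a ≠ c s(u, v)) :
    c s(u, v) ∈ missingColors G k (Function.update c s(u, v) a) u := by
  refine ⟨hc.1 _ huv, fun ⟨e, he, hue, hce⟩ => ?_⟩
  by_cases hee : e = s(u, v)
  · rw [hee, Function.update_self] at hce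
    exact ha hce
  · rw [Function.update_of_ne hee] at hce
    exact hee (hc.eq_of_mem_of_mem he huv hue (Sym2.mem_mk_left u v) hce)

noncomputable def missingColorFinset (G : SimpleGraph V) (k : ℕ) (c : Sym2 V → ℕ) (v : V) :
    Finset ℕ :=
  {a ∈ Icc 1 k | a ∈ missingColors G k c v}

@[simp]
theorem mem_missingColorFinset : a ∈ missingColorFinset G k c v ↔ a ∈ missingColors G k c v :=
  ⟨fun h => (mem_filter.mp h).2, fun h => mem_filter.mpr ⟨h.1, h⟩⟩

theorem le_degree_add_card_missingColorFinset [Fintype V] [DecidableRel G.Adj] (v : V) :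
    k ≤ G.degree v + #(missingColorFinset G k c v) := by
  have hpresent : {a ∈ Icc 1 k | a ∉ missingColors G k c v} ⊆
      (G.neighborFinset v).image (fun w => c s(v, w)) := by
    intro a ha
    rw [mem_filter] at ha
    obtain ⟨w, hw, rfl⟩ := exists_adj_of_notMem_missingColors ha.1 ha.2
    exact mem_image_of_mem _ ((G.mem_neighborFinset v w).mpr hw)
  have hsplit := card_filter_add_card_filter_not (s := Icc 1 k)
    (fun a => a ∈ missingColors G k c v)
  have hle := (card_le_card hpresent).trans card_image_le
  rw [card_neighborFinset_eq_degree] at hle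
  rw [Nat.card_Icc] at hsplit
  unfold missingColorFinset
  omega

end Recoloring

section Degree

variable {V : Type*} [Fintype V] {G H : SimpleGraph V} [DecidableRel G.Adj] {u v w : V}

theorem degree_deleteEdges_add_one (huv : G.Adj u v) :
    (G.deleteEdges {s(u, v)}).degree u + 1 = G.degree u := by
  have hnbr : (G.deleteEdges {s(u, v)}).neighborFinset u = (G.neighborFinset u).erase v := by
    ext w
    simp [and_comm, huv.ne]
  rw [← card_neighborFinset_eq_degree, ← card_neighborFinset_eq_degree, hnbr,
    card_erase_add_one ((G.mem_neighborFinset u v).mpr huv)]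

theorem degree_deleteEdges_of_notMem (hw : w ∉ s(u, v)) :
    (G.deleteEdges {s(u, v)}).degree w = G.degree w := by
  have hnbr : (G.deleteEdges {s(u, v)}).neighborFinset w = G.neighborFinset w := by
    ext z
    simp only [mem_neighborFinset, deleteEdges_adj, Set.mem_singleton_iff, and_iff_left_iff_imp]
    rintro - h
    exact hw (h ▸ Sym2.mem_mk_left w z)
  rw [← card_neighborFinset_eq_degree, ← card_neighborFinset_eq_degree, hnbr]

theorem degree_lt_degree_of_le_of_not_adj [DecidableRel H.Adj] (hHG : H ≤ G) (huv : G.Adj u v)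
    (hn : ¬ H.Adj u v) :
    H.degree u < G.degree u := by
  rw [← card_neighborFinset_eq_degree, ← card_neighborFinset_eq_degree]
  refine card_lt_card ⟨fun w hw => ?_, fun h => hn ?_⟩
  · simpa using hHG ((mem_neighborFinset _ _ _).mp hw)
  · simpa using h ((mem_neighborFinset _ _ _).mpr huv)

theorem card_le_degree_induce {C : Set V} [DecidablePred (· ∈ C)] {x : V} (hx : x ∈ C)
    {s : Finset V} (hs : ∀ z ∈ s, G.Adj x z ∧ z ∈ C) : #s ≤ (G.induce C).degree ⟨x, hx⟩ := by
  rw [← card_neighborFinset_eq_degree, ← card_map (Function.Embedding.subtype _),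
    map_neighborFinset_induce]
  exact card_le_card fun z hz => by simp [(hs z hz).1, (hs z hz).2]

theorem SimpleGraph.Connected.card_filter_degree_eq_one_le_two {W : Type*} [Fintype W]
    {K : SimpleGraph W} [DecidableRel K.Adj] (hK : K.Connected) (hdeg : ∀ v, K.degree v ≤ 2) :
    #{v | K.degree v = 1} ≤ 2 := by
  have hE := hK.card_vert_le_card_edgeSet_add_one
  rw [Nat.card_eq_fintype_card, Nat.card_eq_fintype_card, ← edgeFinset_card] at hE
  have hle : ∑ v, (K.degree v + if K.degree v = 1 then 1 else 0) ≤ ∑ _v : W, 2 :=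
    sum_le_sum fun v _ => by split_ifs <;> have := hdeg v <;> omega
  rw [sum_add_distrib, sum_boole, K.sum_degrees_eq_twice_card_edges, sum_const, card_univ,
    smul_eq_mul] at hle
  push_cast at hle
  omega

theorem SimpleGraph.Reachable.not_reachable_of_degree_eq_one {W : Type*} [Fintype W]
    {K : SimpleGraph W} [DecidableRel K.Adj] (hdeg : ∀ v, K.degree v ≤ 2) {x a b : W}
    (hxa : K.Reachable x a) (hax : a ≠ x) (hbx : b ≠ x) (hab : a ≠ b)
    (hx : K.degree x = 1) (ha : K.degree a = 1) (hb : K.degree b = 1) : ¬ K.Reachable x b := by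
  intro hxb
  have hconn : (K.induce (K.connectedComponentMk x).supp).Connected :=
    (K.connectedComponentMk x).connected_toSimpleGraph
  have hsupp : ∀ w, K.Reachable x w → w ∈ (K.connectedComponentMk x).supp := fun w hw =>
    ConnectedComponent.eq.mpr hw.symm
  have hdegC : ∀ w (hw : w ∈ (K.connectedComponentMk x).supp),
      (K.induce (K.connectedComponentMk x).supp).degree ⟨w, hw⟩ = K.degree w :=
    fun w hw => degree_induce_of_neighborSet_subset fun z hz =>
      ((K.connectedComponentMk x).mem_supp_congr_adj hz).mp hw
  have hthree : 2 < #{w | (K.induce (K.connectedComponentMk x).supp).degree w = 1} := by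
    refine two_lt_card_iff.mpr ⟨⟨x, hsupp x .rfl⟩, ⟨a, hsupp a hxa⟩, ⟨b, hsupp b hxb⟩, ?_⟩
    simp only [mem_filter, mem_univ, true_and, hdegC, ne_eq, Subtype.mk.injEq]
    exact ⟨hx, ha, hb, hax.symm, hbx.symm, hab⟩
  have := hconn.card_filter_degree_eq_one_le_two fun w => by
    rw [hdegC]; exact hdeg w
  omega

end Degree

section Kempe

variable {V : Type*} {H : SimpleGraph V} {k : ℕ} {c : Sym2 V → ℕ} {α γ : ℕ} {v z : V}

theorem chainGraph_adj {p q : V} :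
    (chainGraph H c α γ).Adj p q ↔ H.Adj p q ∧ (c s(p, q) = α ∨ c s(p, q) = γ) := by
  rw [chainGraph, fromEdgeSet_adj, Set.mem_sep_iff, mem_edgeSet]
  exact ⟨fun h => h.1, fun h => ⟨h, h.1.ne⟩⟩

theorem chainGraph_comm : chainGraph H c α γ = chainGraph H c γ α := by
  ext p q
  simp only [chainGraph_adj, or_comm]

theorem reachable_chainGraph_of_mem {e : Sym2 V} (he : e ∈ H.edgeSet) (hce : c e = α ∨ c e = γ)
    {w w' : V} (hw : w ∈ e) (hw' : w' ∈ e) (hvw : (chainGraph H c α γ).Reachable v w) :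
    (chainGraph H c α γ).Reachable v w' := by
  induction e using Sym2.ind with
  | _ p q =>
    have hpq : (chainGraph H c α γ).Adj p q := chainGraph_adj.mpr ⟨he, hce⟩
    rcases Sym2.mem_iff.mp hw with rfl | rfl <;> rcases Sym2.mem_iff.mp hw' with rfl | rfl
    exacts [hvw, hvw.trans hpq.reachable, hvw.trans hpq.symm.reachable, hvw]

noncomputable def kempeSwap (H : SimpleGraph V) (c : Sym2 V → ℕ) (α γ : ℕ) (v : V) :
    Sym2 V → ℕ :=
  fun e => if e ∈ H.edgeSet ∧ ∃ w ∈ e, (chainGraph H c α γ).Reachable v w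
    then Equiv.swap α γ (c e) else c e

theorem kempeSwap_of_not_reachable {e : Sym2 V} (he : e ∈ H.edgeSet) (hz : z ∈ e)
    (hvz : ¬ (chainGraph H c α γ).Reachable v z) : kempeSwap H c α γ v e = c e := by
  unfold kempeSwap
  split_ifs with h
  · obtain ⟨-, w, hw, hvw⟩ := h
    have hce : c e ≠ α ∧ c e ≠ γ := not_or.mp fun hce =>
      hvz (reachable_chainGraph_of_mem he hce hw hz hvw)
    exact Equiv.swap_apply_of_ne_of_ne hce.1 hce.2
  · rfl

theorem eq_of_kempeSwap_eq {e : Sym2 V} {δ : ℕ} (hδα : δ ≠ α) (hδγ : δ ≠ γ)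
    (h : kempeSwap H c α γ v e = δ) : c e = δ := by
  unfold kempeSwap at h
  split_ifs at h
  · rw [Equiv.swap_apply_eq_iff, Equiv.swap_apply_of_ne_of_ne hδα hδγ] at h
    exact h
  · exact h

theorem IsProperEdgeColoring.kempeSwap (hc : IsProperEdgeColoring H k c)
    (hα : α ∈ Icc 1 k) (hγ : γ ∈ Icc 1 k) :
    IsProperEdgeColoring H k (kempeSwap H c α γ v) := by
  refine ⟨fun e he => ?_, fun e he f hf hef ⟨w, hwe, hwf⟩ => ?_⟩
  · unfold _root_.kempeSwap
    split_ifs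
    · rw [Equiv.swap_apply_def]
      split_ifs
      exacts [hγ, hα, hc.1 e he]
    · exact hc.1 e he
  · have hcef : c e ≠ c f := hc.2 e he f hf hef ⟨w, hwe, hwf⟩
    by_cases hvw : (chainGraph H c α γ).Reachable v w
    · have hswap : ∀ g ∈ H.edgeSet, w ∈ g → _root_.kempeSwap H c α γ v g = Equiv.swap α γ (c g) :=
        fun g hg hwg => if_pos ⟨hg, w, hwg, hvw⟩
      rw [hswap e he hwe, hswap f hf hwf]
      exact (Equiv.swap α γ).injective.ne hcef
    · rw [kempeSwap_of_not_reachable he hwe hvw, kempeSwap_of_not_reachable hf hwf hvw]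
      exact hcef

theorem missingColors_kempeSwap_of_not_reachable (hvz : ¬ (chainGraph H c α γ).Reachable v z) :
    missingColors H k (kempeSwap H c α γ v) z = missingColors H k c z := by
  ext b
  constructor <;> rintro ⟨hb, hn⟩ <;> refine ⟨hb, fun ⟨e, he, hze, hce⟩ => hn ⟨e, he, hze, ?_⟩⟩
  · rwa [kempeSwap_of_not_reachable he hze hvz]
  · rwa [kempeSwap_of_not_reachable he hze hvz] at hce

theorem mem_missingColors_kempeSwap_of_ne {δ : ℕ} (hδα : δ ≠ α) (hδγ : δ ≠ γ)
    (hδ : δ ∈ missingColors H k c z) : δ ∈ missingColors H k (kempeSwap H c α γ v) z :=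
  ⟨hδ.1, fun ⟨e, he, hze, hce⟩ => hδ.2 ⟨e, he, hze, eq_of_kempeSwap_eq hδα hδγ hce⟩⟩

theorem mem_missingColors_kempeSwap (hα : α ∈ Icc 1 k)
    (hvz : (chainGraph H c α γ).Reachable v z) (hγ : γ ∈ missingColors H k c z) :
    α ∈ missingColors H k (kempeSwap H c α γ v) z := by
  refine ⟨hα, fun ⟨e, he, hze, hce⟩ => hγ.2 ⟨e, he, hze, ?_⟩⟩
  rw [kempeSwap, if_pos ⟨he, z, hze, hvz⟩, Equiv.swap_apply_eq_iff, Equiv.swap_apply_left] at hce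
  exact hce

theorem IsProperEdgeColoring.degree_chainGraph_le_two [Fintype V] (hc : IsProperEdgeColoring H k c)
    (z : V) : (chainGraph H c α γ).degree z ≤ 2 := by
  rw [← card_neighborFinset_eq_degree]
  refine (card_le_card_of_injOn (fun w => c s(z, w)) (t := {α, γ}) ?_ ?_).trans card_le_two
  · intro w hw
    simpa using (chainGraph_adj.mp ((mem_neighborFinset _ _ _).mp hw)).2
  · intro w hw w' hw' hww'
    have hw := (chainGraph_adj.mp ((mem_neighborFinset _ _ _).mp hw)).1
    have hw' := (chainGraph_adj.mp ((mem_neighborFinset _ _ _).mp hw')).1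
    exact Sym2.congr_right.mp
      (hc.eq_of_mem_of_mem hw hw' (Sym2.mem_mk_left z w) (Sym2.mem_mk_left z w') hww')

theorem IsProperEdgeColoring.degree_chainGraph_eq_one [Fintype V]
    (hc : IsProperEdgeColoring H k c) (hα : α ∈ missingColors H k c z)
    (hγ : γ ∉ missingColors H k c z) (hγk : γ ∈ Icc 1 k) :
    (chainGraph H c α γ).degree z = 1 := by
  obtain ⟨w, hzw, hcw⟩ := exists_adj_of_notMem_missingColors hγk hγ
  rw [← card_neighborFinset_eq_degree, card_eq_one]
  refine ⟨w, eq_singleton_iff_unique_mem.mpr ⟨?_, fun w' hw' => ?_⟩⟩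
  · exact (mem_neighborFinset _ _ _).mpr (chainGraph_adj.mpr ⟨hzw, Or.inr hcw⟩)
  · obtain ⟨hzw', hcol⟩ := chainGraph_adj.mp ((mem_neighborFinset _ _ _).mp hw')
    have hcw' : c s(z, w') = γ :=
      hcol.resolve_left fun h => notMem_missingColors_of_adj hzw' (h ▸ hα)
    exact Sym2.congr_right.mp (hc.eq_of_mem_of_mem hzw' hzw (Sym2.mem_mk_left z w')
      (Sym2.mem_mk_left z w) (hcw'.trans hcw.symm))

end Kempe

section Fan

variable {V : Type*} {H : SimpleGraph V} {k : ℕ} {c : Sym2 V → ℕ} {x y : V}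

/-- Vizing fans at `x` rooted at `y`, listed from the last vertex back to `y`: each new neighbour
`z` of `x` has the colour of `s(x, z)` missing at some earlier vertex of the fan. -/
inductive IsFan (H : SimpleGraph V) (k : ℕ) (c : Sym2 V → ℕ) (x y : V) : List V → Prop
  | root : IsFan H k c x y [y]
  | cons {z w : V} {L : List V} (hL : IsFan H k c x y L) (hw : w ∈ L) (hz : H.Adj x z)
      (hc : c s(x, z) ∈ missingColors H k c w) : IsFan H k c x y (z :: L)

namespace IsFan

theorem eq_or_adj {L : List V} (hL : IsFan H k c x y L) {z : V} (hz : z ∈ L) :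
    z = y ∨ H.Adj x z := by
  induction hL with
  | root => exact Or.inl (List.mem_singleton.mp hz)
  | cons _ _ hxz _ ih => exact (List.mem_cons.mp hz).elim (fun h => Or.inr (h ▸ hxz)) ih

theorem ne_center (hxy : x ≠ y) {L : List V} (hL : IsFan H k c x y L) {z : V} (hz : z ∈ L) :
    z ≠ x := by
  rintro rfl
  exact (hL.eq_or_adj hz).elim hxy (H.irrefl ·)

theorem exists_prefix {L : List V} (hL : IsFan H k c x y L) {u : V} (hu : u ∈ L) :
    ∃ T, IsFan H k c x y (u :: T) ∧ T.length < L.length := by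
  induction hL with
  | root => exact ⟨[], List.mem_singleton.mp hu ▸ root, by simp⟩
  | cons hL hw hxz hcol ih =>
    rcases List.mem_cons.mp hu with rfl | hu
    · exact ⟨_, cons hL hw hxz hcol, by simp⟩
    · obtain ⟨T, hT, hlen⟩ := ih hu
      exact ⟨T, hT, hlen.trans (by simp)⟩

theorem update (hxy : x ≠ y) {L : List V} (hL : IsFan H k c x y L) {z : V} (hz : z ∉ L) (a : ℕ) :
    IsFan H k (Function.update c s(x, z) a) x y L := by
  induction hL with
  | root => exact root
  | @cons u w L hL hw hxu hcol ih =>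
    have hwz : w ∉ s(x, z) := by
      rw [Sym2.mem_iff, not_or]
      exact ⟨hL.ne_center hxy hw, fun h => hz (List.mem_cons_of_mem _ (h ▸ hw))⟩
    refine cons (ih fun h => hz (List.mem_cons_of_mem _ h)) hw hxu ?_
    have hxu : s(x, u) ≠ s(x, z) := fun h => hz (Sym2.congr_right.mp h ▸ List.mem_cons_self)
    rw [Function.update_of_ne hxu, missingColors_update_of_notMem hwz]
    exact hcol

theorem disjoint_missingColors_center
    (hblock : ∀ c, IsProperEdgeColoring H k c →
      Disjoint (missingColors H k c x) (missingColors H k c y))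
    (hxy : x ≠ y) (hc : IsProperEdgeColoring H k c) {u : V} {T : List V}
    (hT : IsFan H k c x y (u :: T)) :
    Disjoint (missingColors H k c x) (missingColors H k c u) := by
  obtain ⟨n, hn⟩ : ∃ n, T.length < n := ⟨_, Nat.lt_succ_self _⟩
  induction n generalizing c u T with
  | zero => exact absurd hn (Nat.not_lt_zero _)
  | succ n ih =>
    rw [Set.disjoint_left]
    intro a hax hau
    cases hT with
    | root => exact Set.disjoint_left.mp (hblock c hc) hax hau
    | @cons _ w _ hT hw hxu hcol =>
      by_cases huT : u ∈ T
      · obtain ⟨T', hT', hlen⟩ := hT.exists_prefix huT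
        exact Set.disjoint_left.mp (ih hc hT' (by omega)) hax hau
      · -- Recolouring `s(x, u)` with `a` frees its old colour at `x`; it is still missing at `w`.
        have hne : a ≠ c s(x, u) := fun h => notMem_missingColors_of_adj hxu (h ▸ hax)
        have hwu : w ∉ s(x, u) := by
          rw [Sym2.mem_iff, not_or]
          exact ⟨hT.ne_center hxy hw, fun h => huT (h ▸ hw)⟩
        obtain ⟨T', hT', hlen⟩ := (hT.update hxy huT a).exists_prefix hw
        refine Set.disjoint_left.mp (ih (hc.update_of_adj hxu hax hau) hT' (by omega))
          (hc.mem_missingColors_update hxu hne) ?_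
        rw [missingColors_update_of_notMem hwu]
        exact hcol

theorem kempeSwap_or {α γ : ℕ} (hα : α ∈ Icc 1 k) (hαx : α ∈ missingColors H k c x) {v : V}
    (hvx : ¬ (chainGraph H c α γ).Reachable v x) {L : List V} (hL : IsFan H k c x y L) :
    IsFan H k (kempeSwap H c α γ v) x y L ∨ ∃ u T, IsFan H k (kempeSwap H c α γ v) x y (u :: T) ∧
      α ∈ missingColors H k (kempeSwap H c α γ v) u := by
  induction hL with
  | root => exact Or.inl root
  | @cons z w L hL hw hxz hcol ih =>
    rcases ih with hL' | hprefix
    · have hβα : c s(x, z) ≠ α := fun h => notMem_missingColors_of_adj hxz (h ▸ hαx)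
      by_cases hwγ : (chainGraph H c α γ).Reachable v w ∧ c s(x, z) = γ
      · obtain ⟨T, hT, -⟩ := hL'.exists_prefix hw
        exact Or.inr ⟨w, T, hT, mem_missingColors_kempeSwap hα hwγ.1 (hwγ.2 ▸ hcol)⟩
      · refine Or.inl (cons hL' hw hxz ?_)
        rw [kempeSwap_of_not_reachable hxz (Sym2.mem_mk_left x z) hvx]
        by_cases hvw : (chainGraph H c α γ).Reachable v w
        · exact mem_missingColors_kempeSwap_of_ne hβα (fun h => hwγ ⟨hvw, h⟩) hcol
        · rw [missingColors_kempeSwap_of_not_reachable hvw]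
          exact hcol
    · exact Or.inr hprefix

theorem disjoint_missingColors [Fintype V]
    (hblock : ∀ c, IsProperEdgeColoring H k c →
      Disjoint (missingColors H k c x) (missingColors H k c y))
    (hxy : x ≠ y) (hc : IsProperEdgeColoring H k c) (hx : (missingColors H k c x).Nonempty)
    {u v : V} {Tu Tv : List V} (hu : IsFan H k c x y (u :: Tu)) (hv : IsFan H k c x y (v :: Tv))
    (huv : u ≠ v) : Disjoint (missingColors H k c u) (missingColors H k c v) := by
  obtain ⟨α, hαx⟩ := hx
  rw [Set.disjoint_left]
  intro γ hγu hγv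
  have hcenter : ∀ {c w T}, IsProperEdgeColoring H k c → IsFan H k c x y (w :: T) →
      α ∈ missingColors H k c x → α ∉ missingColors H k c w := fun hc hw hαx =>
    Set.disjoint_left.mp (hw.disjoint_missingColors_center hblock hxy hc) hαx
  have hγx : γ ∉ missingColors H k c x := fun h =>
    Set.disjoint_left.mp (hu.disjoint_missingColors_center hblock hxy hc) h hγu
  have hdegx : (chainGraph H c α γ).degree x = 1 := hc.degree_chainGraph_eq_one hαx hγx hγu.1
  have hdeg : ∀ {w T}, IsFan H k c x y (w :: T) → γ ∈ missingColors H k c w →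
      (chainGraph H c α γ).degree w = 1 := fun hw hγw => by
    rw [chainGraph_comm]
    exact hc.degree_chainGraph_eq_one hγw (hcenter hc hw hαx) hαx.1
  -- Otherwise swapping the chain through `w` keeps `α` missing at `x` and makes it missing at a
  -- vertex of the fan.
  have hreach : ∀ {w T}, IsFan H k c x y (w :: T) → γ ∈ missingColors H k c w →
      (chainGraph H c α γ).Reachable x w := by
    intro w T hw hγw
    by_contra hxw
    have hwx : ¬ (chainGraph H c α γ).Reachable w x := fun h => hxw h.symm
    have hc' := hc.kempeSwap (v := w) hαx.1 hγw.1
    have hαx' : α ∈ missingColors H k (kempeSwap H c α γ w) x := by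
      rw [missingColors_kempeSwap_of_not_reachable hwx]
      exact hαx
    rcases hw.kempeSwap_or hαx.1 hαx hwx with hw' | ⟨w', T', hw', hαw'⟩
    · exact hcenter hc' hw' hαx' (mem_missingColors_kempeSwap hαx.1 .rfl hγw)
    · exact hcenter hc' hw' hαx' hαw'
  exact (hreach hu hγu).not_reachable_of_degree_eq_one hc.degree_chainGraph_le_two
    (hu.ne_center hxy List.mem_cons_self) (hv.ne_center hxy List.mem_cons_self) huv hdegx
    (hdeg hu hγu) (hdeg hv hγv) (hreach hv hγv)

end IsFan

noncomputable def fanVertices [Fintype V] (H : SimpleGraph V) (k : ℕ) (c : Sym2 V → ℕ)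
    (x y : V) : Finset V :=
  {z | ∃ T, IsFan H k c x y (z :: T)}

theorem sum_card_missingColorFinset_fanVertices_le [Fintype V]
    (hblock : ∀ c, IsProperEdgeColoring H k c →
      Disjoint (missingColors H k c x) (missingColors H k c y))
    (hxy : x ≠ y) (hnadj : ¬ H.Adj x y) (hc : IsProperEdgeColoring H k c)
    (hx : (missingColors H k c x).Nonempty) :
    ∑ z ∈ fanVertices H k c x y, #(missingColorFinset H k c z) ≤
      #((fanVertices H k c x y).erase y) := by
  have hmem : ∀ z, z ∈ fanVertices H k c x y ↔ ∃ T, IsFan H k c x y (z :: T) := by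
    simp [fanVertices]
  rw [← card_biUnion fun u hu v hv huv => ?_]
  · refine (card_le_card fun a ha => ?_).trans (card_image_le (f := fun z => c s(x, z)))
    obtain ⟨u, hu, hau⟩ := mem_biUnion.mp ha
    obtain ⟨T, hT⟩ := (hmem u).mp hu
    rw [mem_missingColorFinset] at hau
    obtain ⟨z, hxz, rfl⟩ := exists_adj_of_notMem_missingColors hau.1 fun hax =>
      Set.disjoint_left.mp (hT.disjoint_missingColors_center hblock hxy hc) hax hau
    refine mem_image_of_mem _ (mem_erase.mpr ⟨fun h => hnadj (h ▸ hxz), ?_⟩)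
    exact (hmem z).mpr ⟨u :: T, .cons hT List.mem_cons_self hxz hau⟩
  · obtain ⟨Tu, hTu⟩ := (hmem u).mp hu
    obtain ⟨Tv, hTv⟩ := (hmem v).mp hv
    have := hTu.disjoint_missingColors hblock hxy hc hx hTv huv
    rw [Function.onFun, Finset.disjoint_left]
    simpa [Set.disjoint_left] using this

theorem adj_of_mem_fanVertices [Fintype V] {z : V} (hz : z ∈ fanVertices H k c x y) (hzy : z ≠ y) :
    H.Adj x z := by
  simp only [fanVertices, mem_filter, mem_univ, true_and] at hz
  obtain ⟨T, hT⟩ := hz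
  exact (hT.eq_or_adj List.mem_cons_self).resolve_left hzy

theorem card_missingColorFinset_le_card_saturated_fanVertices [Fintype V]
    (hblock : ∀ c, IsProperEdgeColoring H k c →
      Disjoint (missingColors H k c x) (missingColors H k c y))
    (hxy : x ≠ y) (hnadj : ¬ H.Adj x y) (hc : IsProperEdgeColoring H k c)
    (hx : (missingColors H k c x).Nonempty) :
    #(missingColorFinset H k c y) ≤
      #{z ∈ (fanVertices H k c x y).erase y | missingColorFinset H k c z = ∅} := by
  have hsum := sum_card_missingColorFinset_fanVertices_le hblock hxy hnadj hc hx
  have hy : y ∈ fanVertices H k c x y := by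
    simp only [fanVertices, mem_filter, mem_univ, true_and]
    exact ⟨[], .root⟩
  have hunsat : #{z ∈ (fanVertices H k c x y).erase y | ¬ missingColorFinset H k c z = ∅} ≤
      ∑ z ∈ (fanVertices H k c x y).erase y, #(missingColorFinset H k c z) := by
    rw [card_filter]
    exact sum_le_sum fun z _ => by
      split_ifs with h
      exacts [Nat.zero_le _, card_pos.mpr (nonempty_iff_ne_empty.mpr h)]
  rw [← add_sum_erase _ _ hy] at hsum
  have := card_filter_add_card_filter_not (s := (fanVertices H k c x y).erase y)
    (missingColorFinset H k c · = ∅)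
  omega

end Fan

section Critical

variable {V : Type*} {G H : SimpleGraph V} {k : ℕ}

def IsEdgeCritical (G : SimpleGraph V) (k : ℕ) : Prop :=
  ¬ EdgeColorable G k ∧ ∀ u v, G.Adj u v → EdgeColorable (G.deleteEdges {s(u, v)}) k

theorem exists_isEdgeCritical_le [Finite V] (h : ¬ EdgeColorable G k) :
    ∃ H ≤ G, IsEdgeCritical H k := by
  obtain ⟨H, hHG, hmin⟩ := exists_minimal_le_of_wellFoundedLT (¬ EdgeColorable · k) G h
  refine ⟨H, hHG, hmin.prop, fun u v huv => ?_⟩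
  by_contra hcol
  have hlt : H.deleteEdges {s(u, v)} < H :=
    (H.deleteEdges_le _).lt_of_ne fun heq => by
      have h : (H.deleteEdges {s(u, v)}).Adj u v := by rwa [heq]
      simp at h
  exact hlt.not_ge (hmin.2 hcol hlt.le)

theorem IsEdgeCritical.exists_adj (hG : IsEdgeCritical G k) : ∃ u v, G.Adj u v := by
  by_contra! h
  refine hG.1 ⟨fun _ => 1, fun e he => ?_, fun e he => ?_⟩ <;>
    induction e using Sym2.ind <;> exact absurd he (h _ _)

variable [Fintype V]

theorem IsEdgeCritical.vizing_adjacency [DecidableRel H.Adj] (hH : IsEdgeCritical H k)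
    (hdeg : ∀ v, H.degree v ≤ k) {x y : V} (hxy : H.Adj x y) :
    ∃ T : Finset V, (∀ z ∈ T, H.Adj x z ∧ z ≠ y ∧ H.degree z = k) ∧ k + 1 ≤ #T + H.degree y := by
  obtain ⟨c, hc⟩ := hH.2 x y hxy
  have hmiss : ∀ v, k ≤ (H.deleteEdges {s(x, y)}).degree v +
      #(missingColorFinset (H.deleteEdges {s(x, y)}) k c v) :=
    le_degree_add_card_missingColorFinset
  have hx : (missingColors (H.deleteEdges {s(x, y)}) k c x).Nonempty := by
    have := hmiss x
    have := degree_deleteEdges_add_one hxy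
    have := hdeg x
    obtain ⟨a, ha⟩ := card_pos.mp
      (by omega : 0 < #(missingColorFinset (H.deleteEdges {s(x, y)}) k c x))
    exact ⟨a, mem_missingColorFinset.mp ha⟩
  have hcount := card_missingColorFinset_le_card_saturated_fanVertices
    (fun c' hc' => disjoint_missingColors_deleteEdges hH.1 hxy hc') hxy.ne (by simp) hc hx
  refine ⟨{z ∈ (fanVertices (H.deleteEdges {s(x, y)}) k c x y).erase y |
    missingColorFinset (H.deleteEdges {s(x, y)}) k c z = ∅}, fun z hz => ?_, ?_⟩
  · obtain ⟨hzZ, hsat⟩ := mem_filter.mp hz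
    obtain ⟨hzy, hzZ⟩ := mem_erase.mp hzZ
    have hxz := adj_of_mem_fanVertices hzZ hzy
    have := hmiss z
    rw [degree_deleteEdges_of_notMem (by simp [hxz.ne', hzy]), hsat, card_empty] at this
    exact ⟨(deleteEdges_adj.mp hxz).1, hzy, le_antisymm (hdeg z) (by omega)⟩
  · have := hmiss y
    have := degree_deleteEdges_add_one hxy.symm
    rw [Sym2.eq_swap] at this
    omega

theorem IsEdgeCritical.le_degree_add_one [DecidableRel G.Adj] [DecidableRel H.Adj]
    (hH : IsEdgeCritical H k) (hHG : H ≤ G) (hdeg : ∀ v, G.degree v ≤ k)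
    (hcore : ∀ x (s : Finset V), G.degree x = k → (∀ z ∈ s, G.Adj x z ∧ G.degree z = k) → #s ≤ 2)
    {w z : V} (hwz : H.Adj w z) : k ≤ H.degree w + 1 := by
  have hHdeg : ∀ v, H.degree v ≤ k := fun v => (degree_le_of_le hHG).trans (hdeg v)
  have hGdeg : ∀ v, H.degree v = k → G.degree v = k := fun v hv =>
    le_antisymm (hdeg v) (hv ▸ degree_le_of_le hHG)
  by_contra! hlow
  obtain ⟨T, hT, hTcard⟩ := hH.vizing_adjacency hHdeg hwz
  obtain ⟨x, hxT⟩ := card_pos.mp (by have := hHdeg z; omega : 0 < #T)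
  obtain ⟨hwx, -, hx⟩ := hT x hxT
  obtain ⟨T', hT', hT'card⟩ := hH.vizing_adjacency hHdeg hwx.symm
  have := hcore x T' (hGdeg x hx) fun z hz => ⟨hHG (hT' z hz).1, hGdeg z (hT' z hz).2.2⟩
  omega

theorem IsEdgeCritical.adj_of_degree_pos [DecidableRel G.Adj] [DecidableRel H.Adj]
    (hH : IsEdgeCritical H k) (hHG : H ≤ G) (hdeg : ∀ v, G.degree v ≤ k)
    (hcore : ∀ x (s : Finset V), G.degree x = k → (∀ z ∈ s, G.Adj x z ∧ G.degree z = k) → #s ≤ 2)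
    {u v : V} (huv : G.Adj u v) (hu : 0 < H.degree u) : H.Adj u v := by
  have hHdeg : ∀ v, H.degree v ≤ k := fun v => (degree_le_of_le hHG).trans (hdeg v)
  have hGdeg : ∀ v, H.degree v = k → G.degree v = k := fun v hv =>
    le_antisymm (hdeg v) (hv ▸ degree_le_of_le hHG)
  by_contra hn
  obtain ⟨z₀, hz₀⟩ := (H.degree_pos_iff_exists_adj u).mp hu
  have hu' : H.degree u + 1 = k ∧ G.degree u = k := by
    have := hH.le_degree_add_one hHG hdeg hcore hz₀
    have := degree_lt_degree_of_le_of_not_adj hHG huv hn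
    have := hdeg u
    omega
  obtain ⟨T, hT, hTcard⟩ := hH.vizing_adjacency hHdeg hz₀
  obtain ⟨z, hzT⟩ := card_pos.mp (by have := hHdeg z₀; omega : 0 < #T)
  obtain ⟨huz, -, hz⟩ := hT z hzT
  obtain ⟨T', hT', hT'card⟩ := hH.vizing_adjacency hHdeg huz.symm
  have := hcore z (insert u T') (hGdeg z hz) fun w hw => by
    rcases mem_insert.mp hw with rfl | hw
    · exact ⟨hHG huz.symm, hu'.2⟩
    · exact ⟨hHG (hT' w hw).1, hGdeg w (hT' w hw).2.2⟩
  rw [card_insert_of_notMem fun h => (hT' u h).2.1 rfl] at this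
  omega

theorem IsEdgeCritical.eq_of_connected [DecidableRel G.Adj] [DecidableRel H.Adj]
    (hH : IsEdgeCritical H k) (hHG : H ≤ G) (hdeg : ∀ v, G.degree v ≤ k)
    (hcore : ∀ x (s : Finset V), G.degree x = k → (∀ z ∈ s, G.Adj x z ∧ G.degree z = k) → #s ≤ 2)
    (hconn : G.Connected) : H = G := by
  obtain ⟨a, b, hab⟩ := hH.exists_adj
  have hpos : ∀ v, 0 < H.degree v := fun v => by
    induction (reachable_iff_reflTransGen a v).mp (hconn a v) with
    | refl => exact (H.degree_pos_iff_exists_adj a).mpr ⟨b, hab⟩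
    | tail _ hvw ih =>
      exact (H.degree_pos_iff_exists_adj _).mpr
        ⟨_, (hH.adj_of_degree_pos hHG hdeg hcore hvw ih).symm⟩
  exact le_antisymm hHG fun u v huv => hH.adj_of_degree_pos hHG hdeg hcore huv (hpos u)

end Critical

open Classical in
theorem stmt_6_general {V : Type*} [Fintype V] (G : SimpleGraph V) (hconn : G.Connected)
    (hclass2b : ¬ EdgeColorable G G.maxDegree)
    (hcore : ∀ v, (G.induce {v : V | G.degree v = G.maxDegree}).degree v ≤ 2)
    (hΔ : 3 ≤ G.maxDegree) :
    G.minDegree = G.maxDegree - 1 := by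
  have hcore' : ∀ x (s : Finset V), G.degree x = G.maxDegree →
      (∀ z ∈ s, G.Adj x z ∧ G.degree z = G.maxDegree) → #s ≤ 2 :=
    fun x s hx hs =>
      (card_le_degree_induce (C := {v | G.degree v = G.maxDegree}) hx hs).trans (hcore ⟨x, hx⟩)
  obtain ⟨H, hHG, hH⟩ := exists_isEdgeCritical_le hclass2b
  have hG : IsEdgeCritical G G.maxDegree :=
    hH.eq_of_connected hHG G.degree_le_maxDegree hcore' hconn ▸ hH
  have : Nonempty V := hconn.nonempty
  have : Nontrivial V := by
    obtain ⟨m, hm⟩ := G.exists_maximal_degree_vertex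
    obtain ⟨w, hw⟩ := (G.degree_pos_iff_exists_adj m).mp (by omega)
    exact nontrivial_of_ne m w hw.ne
  have hlow : ∀ v, G.maxDegree ≤ G.degree v + 1 := fun v => by
    obtain ⟨w, hw⟩ :=
      (G.degree_pos_iff_exists_adj v).mp (hconn.preconnected.degree_pos_of_nontrivial v)
    exact hG.le_degree_add_one le_rfl G.degree_le_maxDegree hcore' hw
  obtain ⟨v, hv⟩ := G.exists_minimal_degree_vertex
  have hreg : G.degree v ≠ G.maxDegree := fun hvΔ => by
    have hall : ∀ z, G.degree z = G.maxDegree := fun z => by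
      have := G.minDegree_le_degree z
      have := G.degree_le_maxDegree z
      omega
    have := hcore' v (G.neighborFinset v) hvΔ fun z hz =>
      ⟨(G.mem_neighborFinset v z).mp hz, hall z⟩
    rw [card_neighborFinset_eq_degree] at this
    omega
  have := hlow v
  have := G.degree_le_maxDegree v
  omega

open Classical in
theorem stmt_6 {V : Type*} [Fintype V] (G : SimpleGraph V) (hconn : G.Connected)
    (hclass2a : EdgeColorable G (G.maxDegree + 1))
    (hclass2b : ¬ EdgeColorable G G.maxDegree)
    (hcore : ∀ v, (G.induce {v : V | G.degree v = G.maxDegree}).degree v ≤ 2)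
    (hΔ : 3 ≤ G.maxDegree) :
    G.minDegree = G.maxDegree - 1 :=
  stmt_6_general G hconn hclass2b hcore hΔ
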